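/- Assume (D+) and let (V,u) be a weak solution of the Lifshitz–Slyozov system with nucleation, with total mass M and V₀ > d(0). Then ρ is increasing, ρ(t) → ∞ as t → ∞, and V(t) → d(0) as t → ∞. -/

import Mathlib

open Set Filter Topology MeasureTheory

/-- Assumption (D+): `d : [0,∞) → [0,∞)` is C¹ with `0 < α ≤ d'(x) ≤ β` for all `x ≥ 0`. -/
structure DPlus (d d' : ℝ → ℝ) (α β : ℝ) : Prop where
  nonneg : ∀ x ∈ Set.Ici (0:ℝ), 0 ≤ d x
  hasDeriv : ∀ x ∈ Set.Ici (0:ℝ), HasDerivWithinAt d (d' x) (Set.Ici 0) x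
  contDeriv : ContinuousOn d' (Set.Ici 0)
  alpha_pos : 0 < α
  deriv_lb : ∀ x ∈ Set.Ici (0:ℝ), α ≤ d' x
  deriv_ub : ∀ x ∈ Set.Ici (0:ℝ), d' x ≤ β

/-- A C¹ test function `φ` (with derivative `φ'`) on `[0,∞)` satisfying
`|φ(x)| ≤ C(1+x²)` and `|φ'(x)| ≤ C(1+x)` for some constant `C`. -/
def IsTest (φ φ' : ℝ → ℝ) : Prop :=
  (∀ x ∈ Set.Ici (0:ℝ), HasDerivWithinAt φ (φ' x) (Set.Ici 0) x) ∧
  ContinuousOn φ' (Set.Ici 0) ∧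
  ∃ C : ℝ, ∀ x ∈ Set.Ici (0:ℝ), |φ x| ≤ C * (1 + x ^ 2) ∧ |φ' x| ≤ C * (1 + x)

/-- Weak solution of the Lifshitz–Slyozov system with nucleation parameter `ε`
(`ε = 0`: no nucleation; `ε = 1`: nucleation with nucleus size `i0`) and total mass `M`:
`V` is C¹ on `[0,∞)`, `u(t,·) ≥ 0` with `(1+x²)u(t,x)` integrable, mass conservation
`V(t) + ∫₀^∞ x u(t,x) dx = M` holds, and for every test function `φ`,
`d/dt ∫₀^∞ φ(x)u(t,x)dx = ∫₀^∞ φ'(x)(V(t)−d(x))u(t,x)dx + ε φ(0) V(t)^{i0}`. -/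
structure WeakSolLSN (d : ℝ → ℝ) (M ε : ℝ) (i0 : ℕ) (V : ℝ → ℝ) (u : ℝ → ℝ → ℝ) : Prop where
  u_nonneg : ∀ t ∈ Set.Ici (0:ℝ), ∀ x ∈ Set.Ici (0:ℝ), 0 ≤ u t x
  V_contDiff : ContDiffOn ℝ 1 V (Set.Ici 0)
  u_int : ∀ t ∈ Set.Ici (0:ℝ), IntegrableOn (fun x => (1 + x ^ 2) * u t x) (Set.Ioi 0)
  mass : ∀ t ∈ Set.Ici (0:ℝ), V t + ∫ x in Set.Ioi (0:ℝ), x * u t x = M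
  weak : ∀ φ φ' : ℝ → ℝ, IsTest φ φ' → ∀ t ∈ Set.Ici (0:ℝ),
    HasDerivWithinAt (fun s => ∫ x in Set.Ioi (0:ℝ), φ x * u s x)
      ((∫ x in Set.Ioi (0:ℝ), φ' x * (V t - d x) * u t x) + ε * φ 0 * V t ^ i0)
      (Set.Ici 0) t

/-! Write `ρ = polymerNumber u`, `W = V - d 0` and `X = M - V` (the mass in polymers). Testing the
weak formulation with `1` and `x` gives `ρ' = V ^ i0` and `W' = -∫ (V - d x) u`, and (D+)
sandwiches the latter: `α X - W ρ ≤ W' ≤ β X - W ρ`.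

The left inequality gives `W' ≥ -ρ W`, so an integrating factor keeps `W` positive, and `ρ` is
nondecreasing. If `ρ` were bounded by `L`, then `W' ≥ α (M - d 0) - (α + L) W` would keep `W`,
hence `ρ'`, eventually above a positive constant, so `ρ` would grow linearly after all. Once
`ρ ≥ R`, `W' ≤ β (M - d 0) - R W` drives `W` eventually below `β (M - d 0) / R`, which is
arbitrarily small. -/

open Real

section Comparison

variable {f f' g G : ℝ → ℝ} {a : ℝ}

theorem monotoneOn_Ici_of_hasDerivWithinAt_nonneg
    (hf : ∀ t ∈ Ici a, HasDerivWithinAt f (f' t) (Ici a) t) (h : ∀ t ∈ Ioi a, 0 ≤ f' t) :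
    MonotoneOn f (Ici a) :=
  monotoneOn_of_hasDerivWithinAt_nonneg (convex_Ici a)
    (fun t ht => (hf t ht).continuousWithinAt)
    (fun t ht => (hf t (interior_subset ht)).mono interior_subset)
    (by rwa [interior_Ici])

theorem monotoneOn_mul_exp_of_hasDerivWithinAt
    (hf : ∀ t ∈ Ici a, HasDerivWithinAt f (f' t) (Ici a) t)
    (hG : ∀ t ∈ Ici a, HasDerivWithinAt G (g t) (Ici a) t)
    (h : ∀ t ∈ Ioi a, 0 ≤ f' t + g t * f t) :
    MonotoneOn (fun t => f t * exp (G t)) (Ici a) :=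
  monotoneOn_Ici_of_hasDerivWithinAt_nonneg (fun t ht => (hf t ht).mul (hG t ht).exp)
    fun t ht => by nlinarith [mul_nonneg (h t ht) (exp_pos (G t)).le]

theorem exists_hasDerivWithinAt_Ici (hg : ContinuousOn g (Ici a)) :
    ∃ G : ℝ → ℝ, ∀ t ∈ Ici a, HasDerivWithinAt G (g t) (Ici a) t := by
  have hcont : Continuous fun t => g (max t a) :=
    hg.comp_continuous (continuous_id.max continuous_const) fun t => le_max_right t a
  refine ⟨fun t => ∫ s in a..t, g (max s a), fun t ht => ?_⟩
  have := (hcont.integral_hasStrictDerivAt a t).hasDerivAt.hasDerivWithinAt (s := Ici a)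
  rwa [max_eq_left ht] at this

theorem pos_of_hasDerivWithinAt_ge_neg_mul (hg : ContinuousOn g (Ici a))
    (hf : ∀ t ∈ Ici a, HasDerivWithinAt f (f' t) (Ici a) t)
    (h : ∀ t ∈ Ioi a, -(g t * f t) ≤ f' t) (ha : 0 < f a) {t : ℝ} (ht : a ≤ t) : 0 < f t := by
  obtain ⟨G, hG⟩ := exists_hasDerivWithinAt_Ici hg
  have hle := monotoneOn_mul_exp_of_hasDerivWithinAt hf hG (fun s hs => by linarith [h s hs])
    self_mem_Ici ht ht
  exact pos_of_mul_pos_left ((mul_pos ha (exp_pos _)).trans_le hle) (exp_pos _).le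

theorem eventually_gt_of_hasDerivWithinAt_ge {c K b : ℝ} (hK : 0 < K)
    (hf : ∀ t ∈ Ici a, HasDerivWithinAt f (f' t) (Ici a) t)
    (h : ∀ t ∈ Ioi a, c - K * f t ≤ f' t) (hb : b < c / K) : ∀ᶠ t in atTop, b < f t := by
  have hmono := monotoneOn_mul_exp_of_hasDerivWithinAt (g := fun _ => K * 1)
    (fun t ht => (hf t ht).sub_const (c / K))
    (fun t _ => ((hasDerivAt_id t).const_mul K).hasDerivWithinAt)
    fun t ht => by
      have := h t ht
      field_simp
      linarith
  have hdecay : Tendsto (fun t => (f a - c / K) * exp (K * a) * exp (-(K * t))) atTop (𝓝 0) := by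
    simpa using ((tendsto_exp_atBot.comp (tendsto_neg_atTop_atBot.comp
      (tendsto_id.const_mul_atTop hK))).const_mul ((f a - c / K) * exp (K * a)))
  filter_upwards [hdecay.eventually (eventually_gt_nhds (sub_neg.2 hb)), eventually_ge_atTop a]
    with t hlt hat
  have hle : (f a - c / K) * exp (K * a) ≤ (f t - c / K) * exp (K * t) :=
    hmono self_mem_Ici hat hat
  have hexp : exp (K * t) * exp (-(K * t)) = 1 := by rw [← exp_add, add_neg_cancel, exp_zero]
  nlinarith [mul_le_mul_of_nonneg_right hle (exp_pos (-(K * t))).le]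

theorem eventually_lt_of_hasDerivWithinAt_le {c K b : ℝ} (hK : 0 < K)
    (hf : ∀ t ∈ Ici a, HasDerivWithinAt f (f' t) (Ici a) t)
    (h : ∀ t ∈ Ioi a, f' t ≤ c - K * f t) (hb : c / K < b) : ∀ᶠ t in atTop, f t < b := by
  have := eventually_gt_of_hasDerivWithinAt_ge (f := -f) (f' := -f') (c := -c) (b := -b) hK
    (fun t ht => (hf t ht).neg) (fun t ht => by simp only [Pi.neg_apply]; linarith [h t ht])
    (by rw [neg_div]; exact neg_lt_neg hb)
  filter_upwards [this] with t ht
  exact neg_lt_neg_iff.1 ht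

theorem tendsto_atTop_of_hasDerivWithinAt_ge {r : ℝ} (hr : 0 < r)
    (hf : ∀ t ∈ Ici a, HasDerivWithinAt f (f' t) (Ici a) t) (h : ∀ᶠ t in atTop, r ≤ f' t) :
    Tendsto f atTop atTop := by
  obtain ⟨T, hT⟩ := eventually_atTop.1 (h.and (eventually_ge_atTop a))
  have haT : a ≤ T := (hT T le_rfl).2
  have hmono : MonotoneOn (fun t => f t - r * t) (Ici T) :=
    monotoneOn_Ici_of_hasDerivWithinAt_nonneg
      (fun t ht => ((hf t (haT.trans ht)).mono (Ici_subset_Ici.2 haT)).sub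
        ((hasDerivAt_id t).const_mul r).hasDerivWithinAt)
      fun t ht => by linarith [(hT t (le_of_lt ht)).1]
  refine tendsto_atTop_mono' atTop ?_ (tendsto_atTop_add_const_left atTop (f T - r * T)
    (tendsto_id.const_mul_atTop hr))
  filter_upwards [eventually_ge_atTop T] with t ht
  have := hmono self_mem_Ici ht ht
  simp only [id] at this ⊢
  linarith

theorem MonotoneOn.tendsto_atTop_of_not_bddAbove (hf : MonotoneOn f (Ici a))
    (h : ¬BddAbove (f '' Ici a)) : Tendsto f atTop atTop := by
  refine tendsto_atTop.2 fun b => ?_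
  obtain ⟨_, ⟨s, hs, rfl⟩, hb⟩ := not_bddAbove_iff.1 h b
  filter_upwards [eventually_ge_atTop s] with t ht
  exact hb.le.trans (hf hs (mem_Ici.2 (le_trans hs ht)) ht)

end Comparison

namespace DPlus

variable {d d' : ℝ → ℝ} {α β : ℝ}

theorem add_mul_le (hD : DPlus d d' α β) {x : ℝ} (hx : 0 ≤ x) :
    d 0 + α * x ≤ d x := by
  have := monotoneOn_Ici_of_hasDerivWithinAt_nonneg (f := fun x => d x - α * x)
    (fun x hx => (hD.hasDeriv x hx).sub ((hasDerivAt_id x).const_mul α).hasDerivWithinAt)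
    (fun x hx => by linarith [hD.deriv_lb x (mem_Ioi.1 hx).le]) self_mem_Ici (mem_Ici.2 hx) hx
  simp only [mul_zero, sub_zero] at this
  linarith

theorem le_add_mul (hD : DPlus d d' α β) {x : ℝ} (hx : 0 ≤ x) :
    d x ≤ d 0 + β * x := by
  have := monotoneOn_Ici_of_hasDerivWithinAt_nonneg (f := fun x => β * x - d x)
    (fun x hx => ((hasDerivAt_id x).const_mul β).hasDerivWithinAt.sub (hD.hasDeriv x hx))
    (fun x hx => by linarith [hD.deriv_ub x (mem_Ioi.1 hx).le]) self_mem_Ici (mem_Ici.2 hx) hx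
  simp only [mul_zero, zero_sub] at this
  linarith

theorem beta_pos (hD : DPlus d d' α β) : 0 < β :=
  (hD.alpha_pos.trans_le (hD.deriv_lb 0 self_mem_Ici)).trans_le (hD.deriv_ub 0 self_mem_Ici)

end DPlus

noncomputable def polymerNumber (u : ℝ → ℝ → ℝ) (t : ℝ) : ℝ := ∫ x in Ioi (0:ℝ), u t x

namespace WeakSolLSN

variable {d d' : ℝ → ℝ} {α β M ε : ℝ} {i0 : ℕ} {V : ℝ → ℝ} {u : ℝ → ℝ → ℝ} {t : ℝ}

theorem aestronglyMeasurable (hsol : WeakSolLSN d M ε i0 V u) (ht : 0 ≤ t) :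
    AEStronglyMeasurable (u t) (volume.restrict (Ioi 0)) := by
  have hinv : Continuous fun x : ℝ => (1 + x ^ 2)⁻¹ := by fun_prop (disch := intro x; positivity)
  refine (hinv.aestronglyMeasurable.mul (hsol.u_int t ht).1).congr (.of_forall fun x => ?_)
  exact inv_mul_cancel_left₀ (by positivity) (u t x)

theorem integrableOn_mul (hsol : WeakSolLSN d M ε i0 V u) (ht : 0 ≤ t) {f : ℝ → ℝ}
    (hf : AEStronglyMeasurable f (volume.restrict (Ioi 0))) {C : ℝ}
    (hC : ∀ x ∈ Ioi (0:ℝ), |f x| ≤ C * (1 + x ^ 2)) :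
    IntegrableOn (fun x => f x * u t x) (Ioi 0) := by
  refine ((hsol.u_int t ht).const_mul C).mono' (hf.mul (hsol.aestronglyMeasurable ht)) ?_
  filter_upwards [ae_restrict_mem measurableSet_Ioi] with x hx
  have hu := hsol.u_nonneg t ht x (mem_Ioi.1 hx).le
  rw [norm_mul, Real.norm_eq_abs, Real.norm_of_nonneg hu, ← mul_assoc]
  exact mul_le_mul_of_nonneg_right (hC x hx) hu

theorem integrableOn (hsol : WeakSolLSN d M ε i0 V u) (ht : 0 ≤ t) :
    IntegrableOn (u t) (Ioi 0) := by
  simpa using hsol.integrableOn_mul ht (aestronglyMeasurable_const (b := (1:ℝ))) (C := 1)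
    fun x _ => by rw [abs_one]; nlinarith [sq_nonneg x]

theorem integrableOn_id_mul (hsol : WeakSolLSN d M ε i0 V u) (ht : 0 ≤ t) :
    IntegrableOn (fun x => x * u t x) (Ioi 0) :=
  hsol.integrableOn_mul ht measurable_id.aestronglyMeasurable (C := 1)
    fun x hx => by rw [abs_of_pos hx]; nlinarith [sq_nonneg (x - 1)]

theorem V_le_M (hsol : WeakSolLSN d M ε i0 V u) (ht : 0 ≤ t) : V t ≤ M := by
  have : 0 ≤ ∫ x in Ioi (0:ℝ), x * u t x := setIntegral_nonneg measurableSet_Ioi fun x hx =>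
    mul_nonneg (mem_Ioi.1 hx).le (hsol.u_nonneg t ht x (mem_Ioi.1 hx).le)
  linarith [hsol.mass t ht]

theorem hasDerivWithinAt_polymerNumber (hsol : WeakSolLSN d M ε i0 V u) (ht : 0 ≤ t) :
    HasDerivWithinAt (polymerNumber u) (ε * V t ^ i0) (Ici 0) t := by
  have htest : IsTest (fun _ => 1) (fun _ => 0) :=
    ⟨fun x _ => hasDerivWithinAt_const x _ 1, continuousOn_const, 1,
      fun x (hx : 0 ≤ x) => by norm_num; constructor <;> positivity⟩
  have := hsol.weak _ _ htest t ht
  simp only [zero_mul, integral_zero, zero_add, mul_one, one_mul] at this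
  exact this

theorem hasDerivWithinAt_V (hsol : WeakSolLSN d M ε i0 V u) (ht : 0 ≤ t) :
    HasDerivWithinAt V (-∫ x in Ioi (0:ℝ), (V t - d x) * u t x) (Ici 0) t := by
  have htest : IsTest id (fun _ => 1) :=
    ⟨fun x _ => hasDerivWithinAt_id x _, continuousOn_const, 1,
      fun x (hx : 0 ≤ x) => ⟨by rw [id, abs_of_nonneg hx]; nlinarith [sq_nonneg (x - 1)],
        by rw [abs_one]; linarith⟩⟩
  have hX := (hsol.weak _ _ htest t ht).const_sub M
  simp only [id, one_mul, mul_zero, zero_mul, add_zero] at hX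
  exact hX.congr (fun s hs => by linarith [hsol.mass s hs]) (by linarith [hsol.mass t ht])

theorem polymerNumber_nonneg (hsol : WeakSolLSN d M ε i0 V u) (ht : 0 ≤ t) :
    0 ≤ polymerNumber u t :=
  setIntegral_nonneg measurableSet_Ioi fun x hx => hsol.u_nonneg t ht x (mem_Ioi.1 hx).le

theorem integrableOn_sub_mul (hD : DPlus d d' α β) (hsol : WeakSolLSN d M ε i0 V u)
    (ht : 0 ≤ t) : IntegrableOn (fun x => (V t - d x) * u t x) (Ioi 0) := by
  have hd : ContinuousOn d (Ici 0) := fun x hx => (hD.hasDeriv x hx).continuousWithinAt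
  refine hsol.integrableOn_mul ht
    (((continuousOn_const.sub hd).mono Ioi_subset_Ici_self).aestronglyMeasurable
      measurableSet_Ioi) (C := |V t| + d 0 + β) fun x hx => ?_
  have hx0 : 0 ≤ x := (mem_Ioi.1 hx).le
  have hdx := hD.le_add_mul hx0
  have hd0 := hD.nonneg 0 self_mem_Ici
  have hβ := hD.beta_pos
  calc |V t - d x| ≤ |V t| + |d x| := abs_sub _ _
    _ ≤ |V t| + d 0 + β * x := by rw [abs_of_nonneg (hD.nonneg x hx0)]; linarith
    _ ≤ (|V t| + d 0 + β) * (1 + x ^ 2) := by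
      nlinarith [abs_nonneg (V t), sq_nonneg x, sq_nonneg (x - 1)]

theorem integral_sub_mul_le (hD : DPlus d d' α β) (hsol : WeakSolLSN d M ε i0 V u)
    (ht : 0 ≤ t) :
    ∫ x in Ioi (0:ℝ), (V t - d x) * u t x ≤ (V t - d 0) * polymerNumber u t - α * (M - V t) := by
  have hX : M - V t = ∫ x in Ioi (0:ℝ), x * u t x := by linarith [hsol.mass t ht]
  rw [hX, polymerNumber, ← integral_const_mul, ← integral_const_mul,
    ← integral_sub ((hsol.integrableOn ht).const_mul _) ((hsol.integrableOn_id_mul ht).const_mul _)]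
  refine setIntegral_mono_on (hsol.integrableOn_sub_mul hD ht)
    (((hsol.integrableOn ht).const_mul _).sub ((hsol.integrableOn_id_mul ht).const_mul _))
    measurableSet_Ioi fun x hx => ?_
  have := hD.add_mul_le (mem_Ioi.1 hx).le
  have := hsol.u_nonneg t ht x (mem_Ioi.1 hx).le
  nlinarith

theorem le_integral_sub_mul (hD : DPlus d d' α β) (hsol : WeakSolLSN d M ε i0 V u)
    (ht : 0 ≤ t) :
    (V t - d 0) * polymerNumber u t - β * (M - V t) ≤ ∫ x in Ioi (0:ℝ), (V t - d x) * u t x := by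
  have hX : M - V t = ∫ x in Ioi (0:ℝ), x * u t x := by linarith [hsol.mass t ht]
  rw [hX, polymerNumber, ← integral_const_mul, ← integral_const_mul,
    ← integral_sub ((hsol.integrableOn ht).const_mul _) ((hsol.integrableOn_id_mul ht).const_mul _)]
  refine setIntegral_mono_on
    (((hsol.integrableOn ht).const_mul _).sub ((hsol.integrableOn_id_mul ht).const_mul _))
    (hsol.integrableOn_sub_mul hD ht) measurableSet_Ioi fun x hx => ?_
  have := hD.le_add_mul (mem_Ioi.1 hx).le
  have := hsol.u_nonneg t ht x (mem_Ioi.1 hx).le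
  nlinarith

theorem d_zero_lt_V (hD : DPlus d d' α β) (hsol : WeakSolLSN d M ε i0 V u) (hV0 : d 0 < V 0)
    (ht : 0 ≤ t) : d 0 < V t := by
  have hρ : ContinuousOn (polymerNumber u) (Ici 0) := fun s hs =>
    (hsol.hasDerivWithinAt_polymerNumber hs).continuousWithinAt
  refine sub_pos.1 (pos_of_hasDerivWithinAt_ge_neg_mul hρ
    (fun s hs => (hsol.hasDerivWithinAt_V hs).sub_const (d 0)) (fun s hs => ?_) (sub_pos.2 hV0) ht)
  have hs : 0 ≤ s := (mem_Ioi.1 hs).le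
  nlinarith [hsol.integral_sub_mul_le hD hs, hsol.V_le_M hs, hD.alpha_pos]

theorem monotoneOn_polymerNumber (hD : DPlus d d' α β) (hsol : WeakSolLSN d M ε i0 V u)
    (hε : 0 ≤ ε) (hV0 : d 0 < V 0) : MonotoneOn (polymerNumber u) (Ici 0) :=
  monotoneOn_Ici_of_hasDerivWithinAt_nonneg (fun _ ht => hsol.hasDerivWithinAt_polymerNumber ht)
    fun _ ht => mul_nonneg hε <| pow_nonneg ((hD.nonneg 0 self_mem_Ici).trans
      (hsol.d_zero_lt_V hD hV0 (mem_Ioi.1 ht).le).le) _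

theorem tendsto_polymerNumber_atTop (hD : DPlus d d' α β) (hsol : WeakSolLSN d M ε i0 V u)
    (hε : 0 < ε) (hV0 : d 0 < V 0) : Tendsto (polymerNumber u) atTop atTop := by
  refine (hsol.monotoneOn_polymerNumber hD hε.le hV0).tendsto_atTop_of_not_bddAbove
    fun ⟨L, hL⟩ => ?_
  have hρL : ∀ s, 0 ≤ s → polymerNumber u s ≤ L := fun s hs => hL ⟨s, hs, rfl⟩
  have hc : 0 < α * (M - d 0) :=
    mul_pos hD.alpha_pos (by linarith [hsol.V_le_M (le_refl 0)])
  have hK : 0 < α + L := add_pos_of_pos_of_nonneg hD.alpha_pos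
    ((hsol.polymerNumber_nonneg le_rfl).trans (hρL 0 le_rfl))
  have hW' : ∀ s ∈ Ioi (0:ℝ), α * (M - d 0) - (α + L) * (V s - d 0) ≤
      -∫ x in Ioi (0:ℝ), (V s - d x) * u s x := fun s hs => by
    have hs : 0 ≤ s := (mem_Ioi.1 hs).le
    nlinarith [hsol.integral_sub_mul_le hD hs, hsol.d_zero_lt_V hD hV0 hs, hρL s hs]
  have hW := eventually_gt_of_hasDerivWithinAt_ge hK
    (fun s hs => (hsol.hasDerivWithinAt_V hs).sub_const (d 0)) hW' (half_lt_self (div_pos hc hK))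
  set w := α * (M - d 0) / (α + L) / 2
  have hw : 0 < w := by positivity
  have hd0 := hD.nonneg 0 self_mem_Ici
  have hρ := tendsto_atTop_of_hasDerivWithinAt_ge (mul_pos hε (pow_pos hw i0))
    (fun _ ht => hsol.hasDerivWithinAt_polymerNumber ht) <| hW.mono fun s hs =>
      mul_le_mul_of_nonneg_left (pow_le_pow_left₀ hw.le (by linarith) _) hε.le
  obtain ⟨_, hLt, ht⟩ := ((hρ.eventually_gt_atTop L).and (eventually_ge_atTop 0)).exists
  exact (hρL _ ht).not_gt hLt

theorem tendsto_V_nhds_d_zero (hD : DPlus d d' α β) (hsol : WeakSolLSN d M ε i0 V u)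
    (hV0 : d 0 < V 0) (hρ : Tendsto (polymerNumber u) atTop atTop) :
    Tendsto V atTop (𝓝 (d 0)) := by
  refine tendsto_order.2 ⟨fun b hb => ?_, fun b hb => ?_⟩
  · filter_upwards [eventually_ge_atTop 0] with t ht using hb.trans (hsol.d_zero_lt_V hD hV0 ht)
  · set B := β * (M - d 0)
    have hB : 0 ≤ B := mul_nonneg hD.beta_pos.le (by linarith [hsol.V_le_M (le_refl 0)])
    set R := (B + 1) / (b - d 0)
    have hR : 0 < R := div_pos (by linarith) (sub_pos.2 hb)
    have hBR : B / R < b - d 0 := by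
      rw [div_lt_iff₀ hR, mul_div_cancel₀ _ (sub_pos.2 hb).ne']
      linarith
    obtain ⟨T, hT⟩ := eventually_atTop.1 ((hρ.eventually_ge_atTop R).and (eventually_ge_atTop 0))
    have hT0 : 0 ≤ T := (hT T le_rfl).2
    have hW' : ∀ s ∈ Ioi T, -∫ x in Ioi (0:ℝ), (V s - d x) * u s x ≤ B - R * (V s - d 0) :=
      fun s hs => by
        obtain ⟨hRs, hs⟩ := hT s (mem_Ioi.1 hs).le
        have hWs := sub_pos.2 (hsol.d_zero_lt_V hD hV0 hs)
        nlinarith [hsol.le_integral_sub_mul hD hs, hD.beta_pos,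
          mul_le_mul_of_nonneg_left hRs hWs.le]
    have hW := eventually_lt_of_hasDerivWithinAt_le hR
      (fun s hs => ((hsol.hasDerivWithinAt_V (hT0.trans hs)).sub_const (d 0)).mono
        (Ici_subset_Ici.2 hT0)) hW' hBR
    filter_upwards [hW] with t ht
    linarith

end WeakSolLSN

theorem LSN_rho_diverges_general
    (d d' : ℝ → ℝ) (α β : ℝ) (hD : DPlus d d' α β)
    (M : ℝ) (i0 : ℕ)
    (V : ℝ → ℝ) (u : ℝ → ℝ → ℝ)
    (hsol : WeakSolLSN d M 1 i0 V u)
    (hV0 : d 0 < V 0) :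
    MonotoneOn (fun t => ∫ x in Ioi (0:ℝ), u t x) (Ici 0) ∧
    Tendsto (fun t => ∫ x in Ioi (0:ℝ), u t x) atTop atTop ∧
    Tendsto V atTop (nhds (d 0)) := by
  have hρ := hsol.tendsto_polymerNumber_atTop hD one_pos hV0
  exact ⟨hsol.monotoneOn_polymerNumber hD zero_le_one hV0, hρ,
    hsol.tendsto_V_nhds_d_zero hD hV0 hρ⟩

/-- Lemma 2.7: under (D+), for a weak solution of the Lifshitz–Slyozov
system with nucleation (`ε = 1`, nucleus size `i0 ≥ 1`), total mass `M` and `V₀ > d(0)`: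
the number of polymers `ρ(t) = ∫₀^∞ u(t,x) dx` is increasing and tends to `+∞`,
and `V(t) → d(0)` as `t → ∞`. -/
theorem LSN_rho_diverges
    (d d' : ℝ → ℝ) (α β : ℝ) (hD : DPlus d d' α β)
    (M : ℝ) (hM : 0 < M) (i0 : ℕ) (hi0 : 1 ≤ i0)
    (V : ℝ → ℝ) (u : ℝ → ℝ → ℝ)
    (hsol : WeakSolLSN d M 1 i0 V u)
    (hV0 : d 0 < V 0) :
    MonotoneOn (fun t => ∫ x in Ioi (0:ℝ), u t x) (Ici 0) ∧
    Tendsto (fun t => ∫ x in Ioi (0:ℝ), u t x) atTop atTop ∧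
    Tendsto V atTop (nhds (d 0)) :=
  LSN_rho_diverges_general d d' α β hD M i0 V u hsol hV0
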